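/- A real Banach space X is smooth if and only if for every bounded linear operator T : X → X and every unit vector x with ‖Tx‖ = ‖T‖, one has: x ⊥_B w implies Tx ⊥_B Tw for all w ∈ X. -/

import Mathlib

/-!
Smoothness means that every unit vector `x` has a unique norming functional, and by James'
theorem `x ⊥_B w` holds exactly when some norming functional at `x` vanishes at `w`.

If `X` is smooth and `T` attains its norm at `x`, then for a norming functional `g` at `T x`
the functional `‖T‖⁻¹ • g ∘ T` norms `x`, so it is *the* norming functional at `x`; it therefore
kills every `w` with `x ⊥_B w`, i.e. `g (T w) = 0`, which gives `T x ⊥_B T w`.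

Conversely, let `f, g` be norming functionals at a unit vector `z`. The rank-one operator
`T = f(·) z` attains its norm at `z`, and `y = w - g w • z` satisfies `z ⊥_B y` (via `g`).
Then `z = T z ⊥_B T y = f y • z` forces `f y = 0`, that is `f w = g w`.
-/

/-- Birkhoff-James orthogonality: `u ⊥_B v` iff `‖u + λ v‖ ≥ ‖u‖` for all real `λ`. -/
def BJOrth {E : Type*} [NormedAddCommGroup E] [NormedSpace ℝ E] (u v : E) : Prop :=
  ∀ l : ℝ, ‖u‖ ≤ ‖u + l • v‖

section

variable {X : Type*} [NormedAddCommGroup X] [NormedSpace ℝ X]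

lemma ContinuousLinearMap.norm_eq_one_of_apply_eq_norm {f : X →L[ℝ] ℝ} {x : X}
    (hf : ‖f‖ ≤ 1) (hx : x ≠ 0) (hfx : f x = ‖x‖) : ‖f‖ = 1 := by
  refine le_antisymm hf (le_of_mul_le_mul_right ?_ (norm_pos_iff.2 hx))
  calc 1 * ‖x‖ = ‖f x‖ := by rw [hfx, norm_norm, one_mul]
    _ ≤ ‖f‖ * ‖x‖ := f.le_opNorm x

namespace BJOrth

lemma of_norming_functional {x w : X} (f : X →L[ℝ] ℝ) (hf : ‖f‖ ≤ 1) (hfx : f x = ‖x‖)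
    (hfw : f w = 0) : BJOrth x w := fun l =>
  calc ‖x‖ = f (x + l • w) := by simp [hfx, hfw]
    _ ≤ ‖f (x + l • w)‖ := le_abs_self _
    _ ≤ ‖f‖ * ‖x + l • w‖ := f.le_opNorm _
    _ ≤ ‖x + l • w‖ := mul_le_of_le_one_left (norm_nonneg _) hf

lemma norm_quotient_mk_eq {x w : X} (h : BJOrth x w) :
    ‖(Submodule.Quotient.mk x : X ⧸ ℝ ∙ w)‖ = ‖x‖ := by
  refine le_antisymm (Submodule.Quotient.norm_mk_le _ x) (QuotientAddGroup.le_norm_iff.2 ?_)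
  intro m hm
  obtain ⟨l, hl⟩ := Submodule.mem_span_singleton.1 ((Submodule.Quotient.eq _).1 hm)
  rw [show m = x + l • w by rw [hl]; abel]
  exact h l

theorem exists_norming_functional {x w : X} (hx : x ≠ 0) (h : BJOrth x w) :
    ∃ f : X →L[ℝ] ℝ, ‖f‖ = 1 ∧ f x = ‖x‖ ∧ f w = 0 := by
  set S := ℝ ∙ w
  have hq := h.norm_quotient_mk_eq
  obtain ⟨g, hg, hgx⟩ := exists_dual_vector ℝ (Submodule.Quotient.mk x : X ⧸ S)
    (by rwa [hq, norm_ne_zero_iff])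
  have hmkQL : ‖S.mkQL‖ ≤ 1 :=
    ContinuousLinearMap.opNorm_le_bound _ zero_le_one fun z => by
      simpa using Submodule.Quotient.norm_mk_le S z
  have hfx : (g ∘L S.mkQL) x = ‖x‖ := by simpa [hq] using hgx
  refine ⟨g ∘L S.mkQL, ?_, hfx, ?_⟩
  · refine ContinuousLinearMap.norm_eq_one_of_apply_eq_norm ?_ hx hfx
    calc ‖g ∘L S.mkQL‖ ≤ ‖g‖ * ‖S.mkQL‖ := g.opNorm_comp_le _
      _ ≤ 1 := by rw [hg, one_mul]; exact hmkQL
  · simp [(Submodule.Quotient.mk_eq_zero S).2 (Submodule.mem_span_singleton_self w)]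

end BJOrth

lemma bjOrth_smul_self_iff {x : X} {c : ℝ} (hx : x ≠ 0) : BJOrth x (c • x) ↔ c = 0 := by
  refine ⟨fun h => by_contra fun hc => ?_, fun hc l => by simp [hc]⟩
  have := h (-c⁻¹)
  rw [smul_smul, neg_mul, inv_mul_cancel₀ hc, neg_one_smul, add_neg_cancel, norm_zero] at this
  exact hx (norm_le_zero_iff.1 this)

theorem bjOrth_map_of_norm_apply_eq_opNorm
    (hsmooth : ∀ z : X, ‖z‖ = 1 → ∃! f : X →L[ℝ] ℝ, ‖f‖ = 1 ∧ f z = 1)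
    {T : X →L[ℝ] X} {x w : X} (hx : ‖x‖ = 1) (hTx : ‖T x‖ = ‖T‖) (hxw : BJOrth x w) :
    BJOrth (T x) (T w) := by
  rcases eq_or_ne (T x) 0 with hTx0 | hTx0
  · intro l
    simp [hTx0]
  have hT : 0 < ‖T‖ := hTx ▸ norm_pos_iff.2 hTx0
  have hx0 : x ≠ 0 := norm_ne_zero_iff.1 (hx ▸ one_ne_zero)
  obtain ⟨g, hg, hgTx⟩ := exists_dual_vector ℝ (T x) (norm_ne_zero_iff.2 hTx0)
  obtain ⟨f, hf, hfx, hfw⟩ := hxw.exists_norming_functional hx0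
  set h := ‖T‖⁻¹ • g ∘L T
  have hhx : h x = 1 := by simp [h, hgTx, hTx, hT.ne']
  have hh : ‖h‖ = 1 := by
    refine ContinuousLinearMap.norm_eq_one_of_apply_eq_norm ?_ hx0 (hhx.trans hx.symm)
    calc ‖h‖ = ‖T‖⁻¹ * ‖g ∘L T‖ := by rw [norm_smul, norm_inv, norm_norm]
      _ ≤ ‖T‖⁻¹ * (‖g‖ * ‖T‖) := by gcongr; exact g.opNorm_comp_le T
      _ = 1 := by rw [hg, one_mul, inv_mul_cancel₀ hT.ne']
  have hhf : h = f := (hsmooth x hx).unique ⟨hh, hhx⟩ ⟨hf, hfx.trans hx⟩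
  have hgTw : g (T w) = 0 := by simpa [h, hT.ne'] using (congrArg (· w) hhf).trans hfw
  exact BJOrth.of_norming_functional g hg.le hgTx hgTw

theorem existsUnique_norming_functional_of_bjOrth_map
    (hmap : ∀ (T : X →L[ℝ] X) (x : X), ‖x‖ = 1 → ‖T x‖ = ‖T‖ →
      ∀ w : X, BJOrth x w → BJOrth (T x) (T w))
    {z : X} (hz : ‖z‖ = 1) : ∃! f : X →L[ℝ] ℝ, ‖f‖ = 1 ∧ f z = 1 := by
  have hz0 : z ≠ 0 := norm_ne_zero_iff.1 (hz ▸ one_ne_zero)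
  obtain ⟨f, hf, hfz⟩ := exists_dual_vector ℝ z (norm_ne_zero_iff.2 hz0)
  replace hfz : f z = 1 := by simpa [hz] using hfz
  refine ⟨f, ⟨hf, hfz⟩, fun g ⟨hg, hgz⟩ => ContinuousLinearMap.ext fun w => ?_⟩
  set T := f.smulRight z
  have hTz : T z = z := by simp [T, hfz]
  have hTnorm : ‖T z‖ = ‖T‖ := by
    rw [hTz, ContinuousLinearMap.norm_smulRight_apply, hf, hz, one_mul]
  have hzy : BJOrth z (w - g w • z) :=
    BJOrth.of_norming_functional g hg.le (by rw [hgz, hz]) (by simp [hgz])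
  have := hmap T z hz hTnorm _ hzy
  rw [hTz, show T (w - g w • z) = f (w - g w • z) • z from rfl,
    bjOrth_smul_self_iff hz0] at this
  simp only [map_sub, map_smul, hfz, smul_eq_mul, mul_one, sub_eq_zero] at this
  exact this.symm

end

theorem stmt16_general {X : Type*} [NormedAddCommGroup X] [NormedSpace ℝ X] :
    (∀ z : X, ‖z‖ = 1 → ∃! f : X →L[ℝ] ℝ, ‖f‖ = 1 ∧ f z = 1) ↔
      (∀ (T : X →L[ℝ] X) (x : X), ‖x‖ = 1 → ‖T x‖ = ‖T‖ →
        ∀ w : X, BJOrth x w → BJOrth (T x) (T w)) :=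
  ⟨fun hsmooth _ _ hx hTx _ hxw => bjOrth_map_of_norm_apply_eq_opNorm hsmooth hx hTx hxw,
    fun hmap _ hz => existsUnique_norming_functional_of_bjOrth_map hmap hz⟩

theorem stmt16 {X : Type*} [NormedAddCommGroup X] [NormedSpace ℝ X] [CompleteSpace X] :
    (∀ z : X, ‖z‖ = 1 → ∃! f : X →L[ℝ] ℝ, ‖f‖ = 1 ∧ f z = 1) ↔
      (∀ (T : X →L[ℝ] X) (x : X), ‖x‖ = 1 → ‖T x‖ = ‖T‖ →
        ∀ w : X, BJOrth x w → BJOrth (T x) (T w)) :=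
  stmt16_general
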